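/- Let ρ_{AB} be a bipartite state and M ∈ L(H_B) with M†M ≤ id_B. Let ρ̂_{AB} = M ρ_{AB} M† / Tr(M ρ_{AB} M†). Then D_max(ρ̂_A || ρ_A) ≤ log(1 / Tr(M ρ_{AB} M†)). -/

import Mathlib

open scoped BigOperators Kronecker ComplexOrder Matrix

/-- The square root `PosSemidef.sqrt` of the older Mathlib, spelled out. -/
noncomputable def oldPSDSqrt {ι : Type*} [Fintype ι] [DecidableEq ι] {X : Matrix ι ι ℂ}
    (hX : X.PosSemidef) : Matrix ι ι ℂ :=
  (hX.1.eigenvectorUnitary : Matrix ι ι ℂ) *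
    Matrix.diagonal ((↑) ∘ (fun x : ℝ => Real.sqrt x) ∘ hX.1.eigenvalues) *
    (star hX.1.eigenvectorUnitary : Matrix ι ι ℂ)

/-- The Schatten 1-norm (trace norm) of a complex matrix. -/
noncomputable def traceNorm {ι : Type*} [Fintype ι] [DecidableEq ι] (X : Matrix ι ι ℂ) : ℝ :=
  (oldPSDSqrt (Matrix.posSemidef_conjTranspose_mul_self X)).trace.re

/-- Positive-semidefinite square root (junk value `0` off the PSD cone). -/
noncomputable def psqrt {ι : Type*} [Fintype ι] [DecidableEq ι] (X : Matrix ι ι ℂ) :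
    Matrix ι ι ℂ :=
  open scoped Classical in
  if h : X.PosSemidef then oldPSDSqrt h else 0

/-- Max-divergence `D_max(ρ‖σ) = inf {λ : ρ ≤ 2^λ σ}`. -/
noncomputable def dMax {ι : Type*} [Fintype ι] (ρ σ : Matrix ι ι ℂ) : ℝ :=
  sInf {l : ℝ | (((2:ℝ) ^ l) • σ - ρ).PosSemidef}

/-- Conditional min-entropy `H_min(A|B)_ρ = sup {r | ∃ state σ_B, ρ ≤ 2^{-r}(id_A ⊗ σ_B)}`. -/
noncomputable def condHmin {A B : Type*} [Fintype A] [Fintype B] [DecidableEq A] [DecidableEq B]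
    (ρ : Matrix (A × B) (A × B) ℂ) : ℝ :=
  sSup {r : ℝ | ∃ σ : Matrix B B ℂ, σ.PosSemidef ∧ σ.trace = 1 ∧
    (((2:ℝ) ^ (-r)) • ((1 : Matrix A A ℂ) ⊗ₖ σ) - ρ).PosSemidef}

/-- Partial trace over the second tensor factor. -/
noncomputable def ptraceRight {A B : Type*} [Fintype B] (ρ : Matrix (A × B) (A × B) ℂ) :
    Matrix A A ℂ := Matrix.of fun a a' => ∑ b, ρ (a, b) (a', b)

/-- The maximally mixed state on `ι`. -/
noncomputable def mmix (ι : Type*) [Fintype ι] [DecidableEq ι] : Matrix ι ι ℂ :=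
  (Fintype.card ι : ℂ)⁻¹ • 1

/-! Write `1 - M†M = L†L`. Operators on `B` can be cycled under the partial trace over `B`, so
`ρ_A = Tr_B[(1 ⊗ M) ρ (1 ⊗ M)†] + Tr_B[(1 ⊗ L) ρ (1 ⊗ L)†] ≥ τ ρ̂_A`, i.e. `ρ̂_A ≤ 2^{log(1/τ)} ρ_A`. -/

namespace ptraceRight

variable {A B : Type*}

lemma add [Fintype B] (X Y : Matrix (A × B) (A × B) ℂ) :
    ptraceRight (X + Y) = ptraceRight X + ptraceRight Y := by
  ext a a'
  simp [ptraceRight, Finset.sum_add_distrib]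

lemma smul [Fintype B] (c : ℂ) (X : Matrix (A × B) (A × B) ℂ) :
    ptraceRight (c • X) = c • ptraceRight X := by
  ext a a'
  simp [ptraceRight, Finset.mul_sum]

lemma trace [Fintype A] [Fintype B] (X : Matrix (A × B) (A × B) ℂ) :
    (ptraceRight X).trace = X.trace := by
  simp [ptraceRight, Matrix.trace, Fintype.sum_prod_type]

def slice (A : Type*) [DecidableEq A] [DecidableEq B] (b : B) : Matrix (A × B) A ℂ :=
  Matrix.of fun p a => if p = (a, b) then 1 else 0

lemma eq_sum_conjTranspose_mul_mul_slice [Fintype A] [Fintype B] [DecidableEq A] [DecidableEq B]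
    (X : Matrix (A × B) (A × B) ℂ) :
    ptraceRight X = ∑ b : B, (slice A b)ᴴ * X * slice A b := by
  ext a a'
  simp [ptraceRight, slice, Matrix.sum_apply, Matrix.mul_apply]

lemma posSemidef [Fintype A] [Fintype B] [DecidableEq A] [DecidableEq B]
    {X : Matrix (A × B) (A × B) ℂ} (hX : X.PosSemidef) : (ptraceRight X).PosSemidef := by
  rw [eq_sum_conjTranspose_mul_mul_slice]
  exact Matrix.posSemidef_sum _ fun b _ => hX.conjTranspose_mul_mul_same _

lemma one_kronecker_mul_mul_conjTranspose [Fintype A] [Fintype B] [DecidableEq A]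
    (X : Matrix (A × B) (A × B) ℂ) (P Q : Matrix B B ℂ) :
    ptraceRight (((1 : Matrix A A ℂ) ⊗ₖ P) * X * ((1 : Matrix A A ℂ) ⊗ₖ Q)ᴴ) =
      ptraceRight (X * ((1 : Matrix A A ℂ) ⊗ₖ (Qᴴ * P))) := by
  ext a a'
  simp only [ptraceRight, Matrix.of_apply, Matrix.mul_apply, Matrix.conjTranspose_apply,
    Matrix.kroneckerMap_apply, Fintype.sum_prod_type, Matrix.one_apply,
    ite_mul, zero_mul, one_mul, mul_ite, mul_zero, apply_ite (star : ℂ → ℂ),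
    star_zero, Finset.sum_ite_irrel, Finset.sum_const_zero,
    Finset.sum_ite_eq', Finset.sum_ite_eq, Finset.mem_univ, if_true, Finset.sum_mul,
    Finset.mul_sum]
  conv_rhs => rw [Finset.sum_comm]; enter [2, x]; rw [Finset.sum_comm]
  conv_rhs => rw [Finset.sum_comm]
  exact Finset.sum_congr rfl fun _ _ => Finset.sum_congr rfl fun _ _ =>
    Finset.sum_congr rfl fun _ _ => by ring

open scoped MatrixOrder Matrix.Norms.L2Operator in
lemma sub_one_kronecker_mul_mul_conjTranspose_posSemidef [Fintype A] [Fintype B]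
    [DecidableEq A] [DecidableEq B] {X : Matrix (A × B) (A × B) ℂ} (hX : X.PosSemidef)
    {M : Matrix B B ℂ} (hM : (1 - Mᴴ * M).PosSemidef) :
    (ptraceRight X -
      ptraceRight (((1 : Matrix A A ℂ) ⊗ₖ M) * X * ((1 : Matrix A A ℂ) ⊗ₖ M)ᴴ)).PosSemidef := by
  obtain ⟨L, hL⟩ := CStarAlgebra.nonneg_iff_eq_star_mul_self.mp hM.nonneg
  have hsplit : ptraceRight X =
      ptraceRight (((1 : Matrix A A ℂ) ⊗ₖ M) * X * ((1 : Matrix A A ℂ) ⊗ₖ M)ᴴ) +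
        ptraceRight (((1 : Matrix A A ℂ) ⊗ₖ L) * X * ((1 : Matrix A A ℂ) ⊗ₖ L)ᴴ) := by
    rw [one_kronecker_mul_mul_conjTranspose, one_kronecker_mul_mul_conjTranspose, ← add,
      ← mul_add, ← Matrix.kronecker_add, ← Matrix.star_eq_conjTranspose L, ← hL,
      add_sub_cancel, Matrix.one_kronecker_one, mul_one]
  rw [hsplit, add_sub_cancel_left]
  exact posSemidef (hX.mul_mul_conjTranspose_same _)

end ptraceRight

lemma dMax_le_of_posSemidef {ι : Type*} [Fintype ι] {ρ σ : Matrix ι ι ℂ} (hρ : ρ.trace = 1)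
    (hσ : σ.trace = 1) {l : ℝ} (h : ((2 : ℝ) ^ l • σ - ρ).PosSemidef) : dMax ρ σ ≤ l := by
  -- equal traces bound the feasible set below by `0`, so `sInf` is not the junk value
  refine csInf_le ⟨0, fun l' hl' => ?_⟩ h
  have htrace : (0 : ℂ) ≤ ((2 : ℝ) ^ l' - 1 : ℝ) := by
    simpa [Matrix.trace_sub, Matrix.trace_smul, hρ, hσ, Complex.real_smul] using
      (show ((2 : ℝ) ^ l' • σ - ρ).PosSemidef from hl').trace_nonneg
  have hpow : (2 : ℝ) ^ (0 : ℝ) ≤ 2 ^ l' := by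
    linarith [Complex.zero_le_real.mp htrace, Real.rpow_zero 2]
  exact (Real.rpow_le_rpow_left_iff one_lt_two).mp hpow

/-- Fact `measuredmax`: for a bipartite state `ρ_{AB}` and `M` on `B` with
`M†M ≤ 1`, the renormalised post-measurement state `ρ̂ = MρM†/Tr(MρM†)`
satisfies `D_max(ρ̂_A ‖ ρ_A) ≤ log(1/Tr(MρM†))`. -/
theorem stmt11 {A B : Type} [Fintype A] [DecidableEq A] [Fintype B] [DecidableEq B]
    (ρ : Matrix (A × B) (A × B) ℂ)
    (hρ : ρ.PosSemidef) (hρ1 : ρ.trace = 1)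
    (M : Matrix B B ℂ) (hM : ((1 : Matrix B B ℂ) - Mᴴ * M).PosSemidef)
    (τ : ℝ) (hτ : 0 < τ)
    (hτeq : ((((1 : Matrix A A ℂ) ⊗ₖ M) * ρ * ((1 : Matrix A A ℂ) ⊗ₖ M)ᴴ).trace = (τ : ℂ))) :
    dMax
      (ptraceRight ((τ : ℂ)⁻¹ •
        (((1 : Matrix A A ℂ) ⊗ₖ M) * ρ * ((1 : Matrix A A ℂ) ⊗ₖ M)ᴴ)))
      (ptraceRight ρ) ≤ Real.logb 2 (1 / τ) := by
  have hτ0 : (τ : ℂ) ≠ 0 := Complex.ofReal_ne_zero.mpr hτ.ne'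
  refine dMax_le_of_posSemidef ?_ (by rw [ptraceRight.trace, hρ1]) ?_
  · rw [ptraceRight.trace, Matrix.trace_smul, hτeq, smul_eq_mul, inv_mul_cancel₀ hτ0]
  · rw [Real.rpow_logb two_pos (by norm_num) (by positivity), ptraceRight.smul, one_div,
      ← Complex.ofReal_inv, Complex.coe_smul, ← smul_sub]
    exact (ptraceRight.sub_one_kronecker_mul_mul_conjTranspose_posSemidef hρ hM).smul
      (inv_nonneg.mpr hτ.le)
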